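/- Fix n ≥ 1 and b ∈ {0,1}^n. Consider the CRN with species x_1^T, x_1^F, …, x_n^T, x_n^F, y^T, y_1^F, …, y_n^F and the (2,0) rules x_i^T + y_i^F → ∅ and x_i^F + y^T → ∅ for each 1 ≤ i ≤ n. Let the initial configuration contain, for each i, m_i ≥ 1 copies of x_i^T if b_i = 1 and m_i ≥ 1 copies of x_i^F if b_i = 0 (and zero copies of the complementary input species), together with exactly one copy of y^T and exactly one copy of each y_i^F. Then if b_1 ∧ ⋯ ∧ b_n = 1, every terminal configuration reachable from this initial configuration contains one copy of y^T and zero copies of every y_i^F; and if b_1 ∧ ⋯ ∧ b_n = 0, every terminal configuration contains zero copies of y^T and at least one copy of some y_i^F. Hence this CRN computes the n-ary AND gate with true-output species y^T and false-output species {y_i^F}. -/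
import Mathlib


/-! ### Chemical Reaction Networks (CRNs) and step CRNs -/

/-- A reaction rule: an ordered pair of multisets (reactants, products). -/
structure Rule (Λ : Type) where
  reactants : Multiset Λ
  products : Multiset Λ
deriving DecidableEq

namespace Rule

/-- A `(2,0)` void rule: exactly two reactants and no products. -/
def IsVoid20 {Λ : Type} (R : Rule Λ) : Prop :=
  Multiset.card R.reactants = 2 ∧ R.products = 0

/-- A `(2,1)` catalytic rule: two reactants, one product which is one of the reactants. -/
def IsCat21 {Λ : Type} (R : Rule Λ) : Prop :=
  Multiset.card R.reactants = 2 ∧ Multiset.card R.products = 1 ∧ R.products ≤ R.reactants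

/-- A void rule: the products form a strict submultiset of the reactants. -/
def IsVoid {Λ : Type} (R : Rule Λ) : Prop := R.products < R.reactants

end Rule

/-- A single rule application: some rule of `Γ` is applicable to `C` and transforms it to `C'`. -/
def RStep {Λ : Type} [DecidableEq Λ] (Γ : Finset (Rule Λ)) (C C' : Multiset Λ) : Prop :=
  ∃ R ∈ Γ, R.reactants ≤ C ∧ C' = C - R.reactants + R.products

/-- Reachability: the reflexive-transitive closure of single rule application. -/
def Reaches {Λ : Type} [DecidableEq Λ] (Γ : Finset (Rule Λ)) : Multiset Λ → Multiset Λ → Prop :=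
  Relation.ReflTransGen (RStep Γ)

/-- A configuration is terminal if no rule of `Γ` is applicable to it. -/
def Terminal {Λ : Type} (Γ : Finset (Rule Λ)) (C : Multiset Λ) : Prop :=
  ∀ R ∈ Γ, ¬ R.reactants ≤ C

/-- The set of terminal configurations reachable from `S` after adding `s` (one step). -/
def stepTerm {Λ : Type} [DecidableEq Λ] (Γ : Finset (Rule Λ)) (S : Set (Multiset Λ)) (s : Multiset Λ) :
    Set (Multiset Λ) :=
  {T | ∃ c ∈ S, Reaches Γ (c + s) T ∧ Terminal Γ T}

/-- `TERM_k`: terminal configurations after running the step CRN with step sequence `ss`. -/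
def termAfter {Λ : Type} [DecidableEq Λ] (Γ : Finset (Rule Λ)) (ss : List (Multiset Λ)) : Set (Multiset Λ) :=
  ss.foldl (stepTerm Γ) {0}

/-- All configurations reachable during any step, starting from terminal sets `S`. -/
def reachDuring {Λ : Type} [DecidableEq Λ] (Γ : Finset (Rule Λ)) :
    Set (Multiset Λ) → List (Multiset Λ) → Set (Multiset Λ)
  | _, [] => ∅
  | S, s :: rest =>
      {C | ∃ c ∈ S, Reaches Γ (c + s) C} ∪ reachDuring Γ (stepTerm Γ S s) rest

/-- All configurations reachable at any step of the step CRN `(Γ, ss)`. -/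
def reachAll {Λ : Type} [DecidableEq Λ] (Γ : Finset (Rule Λ)) (ss : List (Multiset Λ)) : Set (Multiset Λ) :=
  reachDuring Γ {0} ss

/-- Add the input configuration `X` to the first step of the step sequence. -/
def addToHead {Λ : Type} (X : Multiset Λ) : List (Multiset Λ) → List (Multiset Λ)
  | [] => [X]
  | s :: rest => (X + s) :: rest

/-- Species for the `n`-ary AND gate gadget. -/
inductive SpAND (n : ℕ) : Type
  | xT (i : Fin n)
  | xF (i : Fin n)
  | yT
  | yF (i : Fin n)
deriving DecidableEq

/-- The `(2,0)` rules `x_i^T + y_i^F → ∅` and `x_i^F + y^T → ∅`. -/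
def andRules (n : ℕ) : Finset (Rule (SpAND n)) :=
  (Finset.univ.image fun i : Fin n =>
      (⟨{SpAND.xT i, SpAND.yF i}, 0⟩ : Rule (SpAND n))) ∪
  (Finset.univ.image fun i : Fin n =>
      (⟨{SpAND.xF i, SpAND.yT}, 0⟩ : Rule (SpAND n)))


section AndAux

open SpAND

variable {n : ℕ}

lemma ruleA_mem (i : Fin n) : (⟨{xT i, yF i}, 0⟩ : Rule (SpAND n)) ∈ andRules n := by
  simp only [andRules, Finset.mem_union, Finset.mem_image]
  exact Or.inl ⟨i, Finset.mem_univ i, rfl⟩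

lemma ruleB_mem (i : Fin n) : (⟨{xF i, yT}, 0⟩ : Rule (SpAND n)) ∈ andRules n := by
  simp only [andRules, Finset.mem_union, Finset.mem_image]
  exact Or.inr ⟨i, Finset.mem_univ i, rfl⟩

lemma pair_le {a b : SpAND n} {T : Multiset (SpAND n)} (hab : a ≠ b)
    (ha : 1 ≤ T.count a) (hb : 1 ≤ T.count b) : ({a, b} : Multiset (SpAND n)) ≤ T := by
  rw [Multiset.le_iff_count]
  intro s
  simp only [Multiset.insert_eq_cons, Multiset.count_cons, Multiset.count_singleton]
  split_ifs with h1 h2 h2 <;> subst_vars <;> simp_all <;> omega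

lemma rstep_count {C C' : Multiset (SpAND n)} (h : RStep (andRules n) C C') :
    ∃ i : Fin n,
      (∀ s, C'.count s + (({xT i, yF i} : Multiset (SpAND n))).count s = C.count s) ∨
      (∀ s, C'.count s + (({xF i, yT} : Multiset (SpAND n))).count s = C.count s) := by
  obtain ⟨R, hR, hle, rfl⟩ := h
  have hmem : ∃ i : Fin n, R = ⟨{xT i, yF i}, 0⟩ ∨ R = ⟨{xF i, yT}, 0⟩ := by
    simp only [andRules, Finset.mem_union, Finset.mem_image] at hR
    rcases hR with ⟨i, -, rfl⟩ | ⟨i, -, rfl⟩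
    · exact ⟨i, Or.inl rfl⟩
    · exact ⟨i, Or.inr rfl⟩
  obtain ⟨i, rfl | rfl⟩ := hmem
  · refine ⟨i, Or.inl fun s => ?_⟩
    have h1 : ({xT i, yF i} : Multiset (SpAND n)).count s ≤ C.count s :=
      Multiset.count_le_of_le s hle
    show (C - ({xT i, yF i} : Multiset (SpAND n)) + 0).count s + _ = _
    simp only [add_zero, Multiset.count_sub]
    omega
  · refine ⟨i, Or.inr fun s => ?_⟩
    have h1 : ({xF i, yT} : Multiset (SpAND n)).count s ≤ C.count s :=
      Multiset.count_le_of_le s hle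
    show (C - ({xF i, yT} : Multiset (SpAND n)) + 0).count s + _ = _
    simp only [add_zero, Multiset.count_sub]
    omega

/-- The invariant maintained by the AND-gate CRN. -/
def AndInv (b : Fin n → Bool) (mult : Fin n → ℕ) (C : Multiset (SpAND n)) : Prop :=
  (∀ i, C.count (xT i) + 1 = C.count (yF i) + (if b i then mult i else 0)) ∧
  ((∑ i : Fin n, C.count (xF i)) + 1 = C.count yT + ∑ i : Fin n, (if b i then 0 else mult i)) ∧
  C.count yT ≤ 1 ∧
  (∀ i, C.count (xF i) ≤ (if b i then 0 else mult i))

lemma andInv_step (b : Fin n → Bool) (mult : Fin n → ℕ) {C C' : Multiset (SpAND n)}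
    (h : RStep (andRules n) C C') (hC : AndInv b mult C) : AndInv b mult C' := by
  obtain ⟨hE1, hE3, hyT1, hxFb⟩ := hC
  obtain ⟨i, hA | hB⟩ := rstep_count h
  · -- rule xT i + yF i → ∅
    have hxT : ∀ j, C'.count (xT j) + (if j = i then 1 else 0) = C.count (xT j) := by
      intro j
      have := hA (xT j)
      simpa [Multiset.insert_eq_cons, Multiset.count_cons, Multiset.count_singleton] using this
    have hyF : ∀ j, C'.count (yF j) + (if j = i then 1 else 0) = C.count (yF j) := by
      intro j
      have := hA (yF j)
      simpa [Multiset.insert_eq_cons, Multiset.count_cons, Multiset.count_singleton] using this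
    have hxF : ∀ j, C'.count (xF j) = C.count (xF j) := by
      intro j
      have := hA (xF j)
      simpa [Multiset.insert_eq_cons, Multiset.count_cons, Multiset.count_singleton] using this
    have hyT : C'.count yT = C.count yT := by
      have := hA yT
      simpa [Multiset.insert_eq_cons, Multiset.count_cons, Multiset.count_singleton] using this
    refine ⟨fun j => ?_, ?_, ?_, fun j => ?_⟩
    · have h1 := hxT j; have h2 := hyF j; have h3 := hE1 j
      rcases eq_or_ne j i with rfl | hj
      · simp only [if_pos rfl] at h1 h2; omega
      · simp only [if_neg hj] at h1 h2; omega
    · have hsum : (∑ j : Fin n, C'.count (xF j)) = ∑ j : Fin n, C.count (xF j) :=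
        Finset.sum_congr rfl fun j _ => hxF j
      omega
    · omega
    · have := hxF j; have := hxFb j; omega
  · -- rule xF i + yT → ∅
    have hxT : ∀ j, C'.count (xT j) = C.count (xT j) := by
      intro j
      have := hB (xT j)
      simpa [Multiset.insert_eq_cons, Multiset.count_cons, Multiset.count_singleton] using this
    have hyF : ∀ j, C'.count (yF j) = C.count (yF j) := by
      intro j
      have := hB (yF j)
      simpa [Multiset.insert_eq_cons, Multiset.count_cons, Multiset.count_singleton] using this
    have hxF : ∀ j, C'.count (xF j) + (if j = i then 1 else 0) = C.count (xF j) := by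
      intro j
      have := hB (xF j)
      simpa [Multiset.insert_eq_cons, Multiset.count_cons, Multiset.count_singleton] using this
    have hyT : C'.count yT + 1 = C.count yT := by
      have := hB yT
      simpa [Multiset.insert_eq_cons, Multiset.count_cons, Multiset.count_singleton] using this
    refine ⟨fun j => ?_, ?_, ?_, fun j => ?_⟩
    · have := hxT j; have := hyF j; have := hE1 j; omega
    · have hsum : (∑ j : Fin n, C.count (xF j)) = (∑ j : Fin n, C'.count (xF j)) + 1 := by
        calc (∑ j : Fin n, C.count (xF j))
            = ∑ j : Fin n, (C'.count (xF j) + if j = i then 1 else 0) :=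
              Finset.sum_congr rfl fun j _ => (hxF j).symm
          _ = (∑ j : Fin n, C'.count (xF j)) + ∑ j : Fin n, (if j = i then 1 else 0) :=
              Finset.sum_add_distrib
          _ = (∑ j : Fin n, C'.count (xF j)) + 1 := by simp
      omega
    · omega
    · have := hxF j; have := hxFb j; omega

lemma andInv_reaches (b : Fin n → Bool) (mult : Fin n → ℕ) {C T : Multiset (SpAND n)}
    (h : Reaches (andRules n) C T) (hC : AndInv b mult C) : AndInv b mult T := by
  induction h with
  | refl => exact hC
  | tail _ hst ih => exact andInv_step b mult hst ih

end AndAux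

/-- The `(2,0)`-rule CRN above computes the `n`-ary AND gate: starting from
`m_i ≥ 1` copies of the species for each input bit plus one copy of `y^T` and of each `y_i^F`,
every reachable terminal configuration has one `y^T` and no `y_i^F` if all input bits are 1,
and no `y^T` and some `y_i^F` otherwise. -/


theorem stmt6 (n : ℕ) (hn : 1 ≤ n) (b : Fin n → Bool) (mult : Fin n → ℕ)
    (hmult : ∀ i, 1 ≤ mult i) :
    ∀ T : Multiset (SpAND n),
      Reaches (andRules n)
        ((∑ i : Fin n, mult i • ({if b i then SpAND.xT i else SpAND.xF i} : Multiset (SpAND n)))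
          + {SpAND.yT} + ∑ i : Fin n, ({SpAND.yF i} : Multiset (SpAND n))) T →
      Terminal (andRules n) T →
      ((∀ i, b i = true) →
        T.count SpAND.yT = 1 ∧ ∀ i, T.count (SpAND.yF i) = 0) ∧
      (¬ (∀ i, b i = true) →
        T.count SpAND.yT = 0 ∧ ∃ i, 1 ≤ T.count (SpAND.yF i)) := by
  intro T hreach hterm
  classical
  set C0 : Multiset (SpAND n) :=
    (∑ i : Fin n, mult i • ({if b i then SpAND.xT i else SpAND.xF i} : Multiset (SpAND n)))
      + {SpAND.yT} + ∑ i : Fin n, ({SpAND.yF i} : Multiset (SpAND n)) with hC0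
  -- counts of the initial configuration
  have c_xT : ∀ j, C0.count (SpAND.xT j) = if b j then mult j else 0 := by
    intro j
    rw [hC0]
    simp only [Multiset.count_add, Multiset.count_sum', Multiset.count_nsmul,
      Multiset.count_singleton]
    rw [Finset.sum_eq_single j]
    · cases hb : b j <;> simp [hb]
    · intro i _ hij
      cases hb : b i <;> simp [hb, (Ne.symm hij : j ≠ i)]
    · simp
  have c_xF : ∀ j, C0.count (SpAND.xF j) = if b j then 0 else mult j := by
    intro j
    rw [hC0]
    simp only [Multiset.count_add, Multiset.count_sum', Multiset.count_nsmul,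
      Multiset.count_singleton]
    rw [Finset.sum_eq_single j]
    · cases hb : b j <;> simp [hb]
    · intro i _ hij
      cases hb : b i <;> simp [hb, (Ne.symm hij : j ≠ i)]
    · simp
  have c_yT : C0.count SpAND.yT = 1 := by
    rw [hC0]
    simp only [Multiset.count_add, Multiset.count_sum', Multiset.count_nsmul,
      Multiset.count_singleton]
    have h1 : ∀ i : Fin n, (SpAND.yT : SpAND n) ≠ (if b i then SpAND.xT i else SpAND.xF i) := by
      intro i; cases hb : b i <;> simp [hb]
    simp [h1]
  have c_yF : ∀ j, C0.count (SpAND.yF j) = 1 := by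
    intro j
    rw [hC0]
    simp only [Multiset.count_add, Multiset.count_sum', Multiset.count_nsmul,
      Multiset.count_singleton]
    have h1 : ∀ i : Fin n, (SpAND.yF j : SpAND n) ≠ (if b i then SpAND.xT i else SpAND.xF i) := by
      intro i; cases hb : b i <;> simp [hb]
    simp [h1, Finset.sum_ite_eq]
  have hinv0 : AndInv b mult C0 := by
    refine ⟨fun i => ?_, ?_, ?_, fun i => ?_⟩
    · rw [c_xT i, c_yF i]; omega
    · rw [c_yT]
      have : (∑ i : Fin n, C0.count (SpAND.xF i))
          = ∑ i : Fin n, (if b i then 0 else mult i) :=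
        Finset.sum_congr rfl fun i _ => c_xF i
      omega
    · rw [c_yT]
    · rw [c_xF i]
  have hinv : AndInv b mult T := andInv_reaches b mult hreach hinv0
  obtain ⟨hE1, hE3, hyT1, hxFb⟩ := hinv
  constructor
  · -- all bits true
    intro hall
    have hsum0 : (∑ i : Fin n, (if b i then 0 else mult i)) = 0 := by
      apply Finset.sum_eq_zero; intro i _; simp [hall i]
    have hyT : T.count SpAND.yT = 1 := by omega
    refine ⟨hyT, fun i => ?_⟩
    by_contra hne
    have h1 : 1 ≤ T.count (SpAND.yF i) := by omega
    have h2 : 1 ≤ T.count (SpAND.xT i) := by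
      have h3 := hE1 i
      simp only [hall i, if_true] at h3
      have h4 := hmult i
      omega
    exact hterm _ (ruleA_mem i) (pair_le (by simp) h2 h1)
  · -- some bit false
    intro hnall
    push_neg at hnall
    obtain ⟨j, hj⟩ := hnall
    have hbj : b j = false := by
      cases hb : b j
      · rfl
      · exact absurd hb hj
    have hyFj : 1 ≤ T.count (SpAND.yF j) := by
      have := hE1 j; simp [hbj] at this; omega
    have hyT0 : T.count SpAND.yT = 0 := by
      by_contra hne
      have hyT : T.count SpAND.yT = 1 := by omega
      have hsumge : mult j ≤ ∑ i : Fin n, (if b i then 0 else mult i) := by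
        have : (if b j then 0 else mult j) ≤ ∑ i : Fin n, (if b i then 0 else mult i) :=
          Finset.single_le_sum (f := fun i => if b i then 0 else mult i)
            (fun i _ => Nat.zero_le _) (Finset.mem_univ j)
        simpa [hbj] using this
      have hxFsum : 1 ≤ ∑ i : Fin n, T.count (SpAND.xF i) := by
        have := hmult j; omega
      have hex : ∃ k, 1 ≤ T.count (SpAND.xF k) := by
        by_contra hk
        push_neg at hk
        have : (∑ i : Fin n, T.count (SpAND.xF i)) = 0 :=
          Finset.sum_eq_zero fun i _ => by have := hk i; omega
        omega
      obtain ⟨k, hk⟩ := hex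
      exact hterm _ (ruleB_mem k) (pair_le (by simp) hk (by omega))
    exact ⟨hyT0, j, hyFj⟩
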